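/- arXiv:1007.4886 — 2 statements merged into one kernel-verified Lean document; each statement's English description precedes it below -/
import Mathlib

section
/- Let G be a finite group with an automorphism τ ∈ Aut(G) such that τ² = 1, let K be a subfield of ℂ, and let V_{G,τ} be the K-vector space with basis {C_ω : ω ∈ I_{G,τ}}. Suppose there exists a function sign_G : G × I_{G,τ} → K such that the map ρ : G → GL(V_{G,τ}) defined by ρ(g)C_ω = sign_G(g,ω)·C_{g·ω·τ(g)⁻¹} is a representation. Then ρ is a Gelfand model for G if and only if the functions g ↦ sign_G(g,ω), restricted to the twisted centralizers C_{G,τ}(ω) with ω ranging over any set of representatives of the twisted conjugacy classes in I_{G,τ}, form a generalized involution model for G. -/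
open scoped Classical BigOperators
open CategoryTheory

noncomputable section

/-- The twisted centralizer of `ω` under `τ`-twisted conjugation. -/
def twistedCent {G : Type*} [Group G] (τ : G ≃* G) (ω : G) : Subgroup G where
  carrier := {g | g * ω * (τ g)⁻¹ = ω}
  one_mem' := by simp
  mul_mem' := by
    intro a b ha hb
    simp only [Set.mem_setOf_eq] at ha hb ⊢
    have h : a * b * ω * (τ (a * b))⁻¹ = a * (b * ω * (τ b)⁻¹) * (τ a)⁻¹ := by
      simp only [map_mul, mul_inv_rev]
      group
    rw [h, hb, ha]
  inv_mem' := by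
    intro a ha
    simp only [Set.mem_setOf_eq] at ha ⊢
    rw [map_inv, inv_inv]
    conv_lhs => rw [← ha]
    group

/-- The set of irreducible complex characters of `G`. -/
def irrCharSet (G : Type) [Group G] : Set (G → ℂ) :=
  {χ | ∃ V : FDRep ℂ G, Simple V ∧ χ = fun g => FDRep.character V g}

/-- The induced character of `lam : H → ℂ`, via the Frobenius formula. -/
def indChar {G : Type} [Group G] [Fintype G] (H : Subgroup G) (lam : H → ℂ) (g : G) : ℂ :=
  (Nat.card H : ℂ)⁻¹ * ∑ x : G, if h : x⁻¹ * g * x ∈ H then lam ⟨x⁻¹ * g * x, h⟩ else 0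

/-- `G` has a generalized involution model with respect to `τ`. -/
def HasGIMwrt (G : Type) [Group G] [Fintype G] (τ : G ≃* G) : Prop :=
  ∃ (R : Finset G) (lam : ∀ ω : G, twistedCent τ ω →* ℂ),
    (∀ ω ∈ R, ω * τ ω = 1) ∧
    (∀ v : G, v * τ v = 1 → ∃! ω, ω ∈ R ∧ ∃ g : G, g * v * (τ g)⁻¹ = ω) ∧
    (∀ x : G, (∑ ω ∈ R, indChar (twistedCent τ ω) (fun h => lam ω h) x) =
      ∑ᶠ ψ ∈ irrCharSet G, ψ x)

/-- `G` has a generalized involution model. -/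
def HasGIM (G : Type) [Group G] [Fintype G] : Prop :=
  ∃ τ : G ≃* G, (∀ g, τ (τ g) = g) ∧ HasGIMwrt G τ

end

theorem twistI_mem {G : Type} [Group G] (τ : G ≃* G) (hτ : ∀ g, τ (τ g) = g)
    (g : G) (ω : {ω : G // ω * τ ω = 1}) :
    (g * ω.1 * (τ g)⁻¹) * τ (g * ω.1 * (τ g)⁻¹) = 1 := by
  have h2 : ω.1 * τ ω.1 = 1 := ω.2
  simp only [map_mul, map_inv, hτ]
  calc g * ω.1 * (τ g)⁻¹ * (τ g * τ ω.1 * g⁻¹)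
      = g * (ω.1 * τ ω.1) * g⁻¹ := by group
    _ = 1 := by rw [h2, mul_one, mul_inv_cancel]


open scoped Classical BigOperators

section Aux

variable {G : Type} [Group G] (τ : G ≃* G)

theorem gm_mem_tc (ω g : G) : g ∈ twistedCent τ ω ↔ g * ω * (τ g)⁻¹ = ω := Iff.rfl

theorem gm_act_mul (a b ω : G) :
    (a * b) * ω * (τ (a * b))⁻¹ = a * (b * ω * (τ b)⁻¹) * (τ a)⁻¹ := by
  simp only [map_mul, mul_inv_rev]; group

theorem gm_act_one (ω : G) : (1 : G) * ω * (τ 1)⁻¹ = ω := by simp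

theorem gm_act_inv_cancel (g v : G) : g⁻¹ * (g * v * (τ g)⁻¹) * (τ g⁻¹)⁻¹ = v := by
  simp only [map_inv, inv_inv]; group

theorem gm_mem_iff (ω x g : G) :
    x⁻¹ * g * x ∈ twistedCent τ ω ↔ g ∈ twistedCent τ (x * ω * (τ x)⁻¹) := by
  simp only [gm_mem_tc]
  constructor
  · intro h
    have : x * ((x⁻¹ * g * x) * ω * (τ (x⁻¹ * g * x))⁻¹) * (τ x)⁻¹
        = g * (x * ω * (τ x)⁻¹) * (τ g)⁻¹ := by
      simp only [map_mul, map_inv, mul_inv_rev, inv_inv]; group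
    rw [h] at this; exact this.symm
  · intro h
    have : x⁻¹ * (g * (x * ω * (τ x)⁻¹) * (τ g)⁻¹) * τ x
        = (x⁻¹ * g * x) * ω * (τ (x⁻¹ * g * x))⁻¹ := by
      simp only [map_mul, map_inv, mul_inv_rev, inv_inv]; group
    rw [h] at this
    rw [← this]; group

end Aux

section Aux2

variable {G : Type} [Group G] [Fintype G] (τ : G ≃* G)

theorem gm_fiber_card (ω x0 : G) :
    ({x ∈ Finset.univ | x * ω * (τ x)⁻¹ = x0 * ω * (τ x0)⁻¹} : Finset G).card
      = Nat.card (twistedCent τ ω) := by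
  rw [Nat.card_eq_fintype_card, Fintype.card_subtype]
  apply Finset.card_bij' (fun x _ => x0⁻¹ * x) (fun y _ => x0 * y)
  · intro a ha
    simp only [Finset.mem_filter, Finset.mem_univ, true_and] at ha ⊢
    rw [gm_mem_tc]
    have h1 : (x0⁻¹ * a) * ω * (τ (x0⁻¹ * a))⁻¹
        = x0⁻¹ * (a * ω * (τ a)⁻¹) * (τ x0⁻¹)⁻¹ := gm_act_mul τ _ _ _
    rw [h1, ha]
    exact gm_act_inv_cancel τ x0 ω
  · intro b hb
    simp only [Finset.mem_filter, Finset.mem_univ, true_and] at hb ⊢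
    rw [gm_mem_tc] at hb
    have h1 : (x0 * b) * ω * (τ (x0 * b))⁻¹
        = x0 * (b * ω * (τ b)⁻¹) * (τ x0)⁻¹ := gm_act_mul τ _ _ _
    rw [h1, hb]
  · intro a _; group
  · intro b _; group

theorem gm_orbit_sum (ω : G) (H : G → ℂ) :
    ∑ x : G, H (x * ω * (τ x)⁻¹)
      = (Nat.card (twistedCent τ ω) : ℂ)
        * ∑ v ∈ Finset.univ.image (fun x : G => x * ω * (τ x)⁻¹), H v := by
  rw [Finset.sum_comp H (fun x : G => x * ω * (τ x)⁻¹), Finset.mul_sum]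
  apply Finset.sum_congr rfl
  intro b hb
  obtain ⟨x0, _, hx0⟩ := Finset.mem_image.mp hb
  subst hx0
  rw [gm_fiber_card τ ω x0, nsmul_eq_mul]

end Aux2
set_option synthInstance.maxHeartbeats 1000000
set_option maxHeartbeats 1000000
section Aux3

variable {G : Type} [Group G] (K : Subfield ℂ)
    (τ : G ≃* G) (hτ : ∀ g, τ (τ g) = g)
    (sgn : G → G → K)
    (ρ : Representation K G ({ω : G // ω * τ ω = 1} → K))
    (hρ : ∀ (g : G) (ω : {ω : G // ω * τ ω = 1}),
      ρ g (Pi.single ω 1) =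
        sgn g ω.1 • (Pi.single
          (⟨g * ω.1 * (τ g)⁻¹, twistI_mem τ hτ g ω⟩ : {ω : G // ω * τ ω = 1}) 1
            : {ω : G // ω * τ ω = 1} → K))

include hτ hρ

theorem gm_cocycle (g h : G) (ω : {ω : G // ω * τ ω = 1}) :
    sgn (g * h) ω.1 = sgn g (h * ω.1 * (τ h)⁻¹) * sgn h ω.1 := by
  set p : {ω : G // ω * τ ω = 1} :=
    ⟨(g * h) * ω.1 * (τ (g * h))⁻¹, twistI_mem τ hτ (g * h) ω⟩ with hp
  set q : {ω : G // ω * τ ω = 1} :=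
    ⟨h * ω.1 * (τ h)⁻¹, twistI_mem τ hτ h ω⟩ with hq
  have hpq : (⟨g * q.1 * (τ g)⁻¹, twistI_mem τ hτ g q⟩ : {ω : G // ω * τ ω = 1}) = p := by
    apply Subtype.ext
    simp only [hp, hq]
    exact (gm_act_mul τ g h ω.1).symm
  have e1 : ρ (g * h) (Pi.single ω 1) = ρ g (ρ h (Pi.single ω 1)) := by
    rw [map_mul]; rfl
  rw [hρ, hρ, map_smul, hρ, hpq, smul_smul] at e1
  have e2 := congrFun e1 p
  simp only [hp, Pi.smul_apply, Pi.single_eq_same, smul_eq_mul, mul_one] at e2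
  rw [e2]; ring

theorem gm_one (ω : {ω : G // ω * τ ω = 1}) : sgn 1 ω.1 = 1 := by
  have e1 : ρ 1 (Pi.single ω 1) = Pi.single ω (1 : K) := by rw [map_one]; rfl
  rw [hρ] at e1
  have hq : (⟨1 * ω.1 * (τ 1)⁻¹, twistI_mem τ hτ 1 ω⟩ : {ω : G // ω * τ ω = 1}) = ω := by
    apply Subtype.ext; exact gm_act_one τ ω.1
  rw [hq] at e1
  have e2 := congrFun e1 ω
  simpa [Pi.single_eq_same] using e2

theorem gm_ne (x : G) (ω : {ω : G // ω * τ ω = 1}) : sgn x ω.1 ≠ 0 := by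
  intro h0
  have e1 := gm_cocycle K τ hτ sgn ρ hρ x⁻¹ x ω
  rw [inv_mul_cancel, gm_one K τ hτ sgn ρ hρ, h0, mul_zero] at e1
  exact one_ne_zero e1

theorem gm_conj (x g : G) (ω : {ω : G // ω * τ ω = 1})
    (hx : x⁻¹ * g * x ∈ twistedCent τ ω.1) :
    sgn (x⁻¹ * g * x) ω.1 = sgn g (x * ω.1 * (τ x)⁻¹) := by
  have c1 : sgn (g * x) ω.1 = sgn g (x * ω.1 * (τ x)⁻¹) * sgn x ω.1 :=
    gm_cocycle K τ hτ sgn ρ hρ g x ω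
  have c2 : sgn (x * (x⁻¹ * g * x)) ω.1
      = sgn x ((x⁻¹ * g * x) * ω.1 * (τ (x⁻¹ * g * x))⁻¹) * sgn (x⁻¹ * g * x) ω.1 :=
    gm_cocycle K τ hτ sgn ρ hρ x (x⁻¹ * g * x) ω
  rw [gm_mem_tc] at hx
  rw [hx] at c2
  have hgx : x * (x⁻¹ * g * x) = g * x := by group
  rw [hgx, c1] at c2
  exact (mul_left_cancel₀ (gm_ne K τ hτ sgn ρ hρ x ω) (by rw [← c2]; ring)).symm
theorem gm_trace [Fintype G] (g : G) :
    LinearMap.trace K ({ω : G // ω * τ ω = 1} → K) (ρ g)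
      = ∑ ω : {ω : G // ω * τ ω = 1},
          if g * ω.1 * (τ g)⁻¹ = ω.1 then sgn g ω.1 else 0 := by
  rw [LinearMap.trace_eq_matrix_trace K (Pi.basisFun K _) (ρ g), Matrix.trace]
  apply Finset.sum_congr rfl
  intro ω _
  rw [Matrix.diag_apply, LinearMap.toMatrix_apply, Pi.basisFun_apply, Pi.basisFun_repr, hρ]
  simp only [Pi.smul_apply, smul_eq_mul]
  by_cases hc : g * ω.1 * (τ g)⁻¹ = ω.1
  · have : (⟨g * ω.1 * (τ g)⁻¹, twistI_mem τ hτ g ω⟩ : {ω : G // ω * τ ω = 1}) = ω :=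
      Subtype.ext hc
    rw [this, Pi.single_eq_same, if_pos hc, mul_one]
  · have : ω ≠ (⟨g * ω.1 * (τ g)⁻¹, twistI_mem τ hτ g ω⟩ : {ω : G // ω * τ ω = 1}) := by
      intro h; exact hc (congrArg Subtype.val h).symm
    rw [Pi.single_eq_of_ne this, if_neg hc, mul_zero]

theorem gm_key [Fintype G] (R : Finset G)
    (hR1 : ∀ ω ∈ R, ω * τ ω = 1)
    (hR2 : ∀ v : G, v * τ v = 1 → ∃! ω, ω ∈ R ∧ ∃ g : G, g * v * (τ g)⁻¹ = ω)
    (g : G) :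
    ∑ ω ∈ R, indChar (twistedCent τ ω) (fun h => (sgn h.1 ω : ℂ)) g
      = ∑ ω : {ω : G // ω * τ ω = 1},
          if g * ω.1 * (τ g)⁻¹ = ω.1 then (sgn g ω.1 : ℂ) else 0 := by
  set F : G → ℂ := fun v => if g * v * (τ g)⁻¹ = v then (sgn g v : ℂ) else 0 with hF
  have stepA : ∀ ω ∈ R,
      indChar (twistedCent τ ω) (fun h => (sgn h.1 ω : ℂ)) g
        = ∑ v ∈ Finset.univ.image (fun x : G => x * ω * (τ x)⁻¹), F v := by
    intro ω hω
    have hωI : ω * τ ω = 1 := hR1 ω hω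
    have inner : ∀ x : G,
        (if h : x⁻¹ * g * x ∈ twistedCent τ ω then
          ((sgn (x⁻¹ * g * x) ω : ℂ)) else 0) = F (x * ω * (τ x)⁻¹) := by
      intro x
      by_cases hx : x⁻¹ * g * x ∈ twistedCent τ ω
      · rw [dif_pos hx]
        have hg : g ∈ twistedCent τ (x * ω * (τ x)⁻¹) := (gm_mem_iff τ ω x g).mp hx
        rw [gm_mem_tc] at hg
        have hv := gm_conj K τ hτ sgn ρ hρ x g ⟨ω, hωI⟩ hx
        simp only [hF, if_pos hg]
        exact_mod_cast congrArg (fun z : K => (z : ℂ)) hv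
      · rw [dif_neg hx]
        have hg : ¬ g ∈ twistedCent τ (x * ω * (τ x)⁻¹) := fun h =>
          hx ((gm_mem_iff τ ω x g).mpr h)
        rw [gm_mem_tc] at hg
        simp only [hF, if_neg hg]
    rw [indChar]
    have : (∑ x : G, if h : x⁻¹ * g * x ∈ twistedCent τ ω then
        ((sgn (x⁻¹ * g * x) ω : ℂ)) else 0) = ∑ x : G, F (x * ω * (τ x)⁻¹) :=
      Finset.sum_congr rfl (fun x _ => inner x)
    rw [this, gm_orbit_sum τ ω F, ← mul_assoc, inv_mul_cancel₀, one_mul]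
    exact_mod_cast Nat.cast_ne_zero.mpr (Nat.card_pos (α := twistedCent τ ω)).ne'
  rw [Finset.sum_congr rfl stepA]
  have hdisj : (↑R : Set G).PairwiseDisjoint
      (fun ω => Finset.univ.image (fun x : G => x * ω * (τ x)⁻¹)) := by
    intro ω1 h1 ω2 h2 hne
    simp only [Function.onFun, Finset.disjoint_left]
    intro v hv1 hv2
    obtain ⟨x1, _, hx1⟩ := Finset.mem_image.mp hv1
    obtain ⟨x2, _, hx2⟩ := Finset.mem_image.mp hv2
    have hvI : v * τ v = 1 := by
      rw [← hx1]; exact twistI_mem τ hτ x1 ⟨ω1, hR1 ω1 h1⟩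
    obtain ⟨w, _, huniq⟩ := hR2 v hvI
    have e1 : ω1 = w := huniq ω1 ⟨h1, x1⁻¹, by rw [← hx1]; exact gm_act_inv_cancel τ x1 ω1⟩
    have e2 : ω2 = w := huniq ω2 ⟨h2, x2⁻¹, by rw [← hx2]; exact gm_act_inv_cancel τ x2 ω2⟩
    exact hne (e1.trans e2.symm)
  rw [← Finset.sum_biUnion hdisj]
  have hcov : R.biUnion (fun ω => Finset.univ.image (fun x : G => x * ω * (τ x)⁻¹))
      = Finset.univ.filter (fun v : G => v * τ v = 1) := by
    apply Finset.ext
    intro v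
    simp only [Finset.mem_biUnion, Finset.mem_filter, Finset.mem_univ, true_and,
      Finset.mem_image]
    constructor
    · rintro ⟨ω, hω, x, hx⟩
      rw [← hx]; exact twistI_mem τ hτ x ⟨ω, hR1 ω hω⟩
    · intro hv
      obtain ⟨w, ⟨hwR, x, hx⟩, _⟩ := hR2 v hv
      refine ⟨w, hwR, x⁻¹, ?_⟩
      rw [← hx]; exact gm_act_inv_cancel τ x v
  rw [hcov]
  have hsub := Finset.sum_subtype (p := fun v : G => v * τ v = 1) (F := inferInstance)
    (Finset.univ.filter (fun v : G => v * τ v = 1)) (fun x => by simp) F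
  rw [hsub]

end Aux3
set_option synthInstance.maxHeartbeats 1000000 in
set_option maxHeartbeats 1000000 in
/-- A representation on the span of the generalized involutions, acting on basis
vectors by twisted conjugation with signs, is a Gelfand model if and only if the
sign functions form a generalized involution model. -/
theorem gelfand_model_iff_gim (G : Type) [Group G] [Fintype G] (K : Subfield ℂ)
    (τ : G ≃* G) (hτ : ∀ g, τ (τ g) = g)
    (sgn : G → G → K)
    (ρ : Representation K G ({ω : G // ω * τ ω = 1} → K))
    (hρ : ∀ (g : G) (ω : {ω : G // ω * τ ω = 1}),
      ρ g (Pi.single ω 1) =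
        sgn g ω.1 • (Pi.single
          (⟨g * ω.1 * (τ g)⁻¹, twistI_mem τ hτ g ω⟩ : {ω : G // ω * τ ω = 1}) 1
            : {ω : G // ω * τ ω = 1} → K)) :
    (∀ g : G, ((LinearMap.trace K ({ω : G // ω * τ ω = 1} → K) (ρ g) : K) : ℂ) =
        ∑ᶠ ψ ∈ irrCharSet G, ψ g)
    ↔
    (∀ R : Finset G,
      ((∀ ω ∈ R, ω * τ ω = 1) ∧
        (∀ v : G, v * τ v = 1 → ∃! ω, ω ∈ R ∧ ∃ g : G, g * v * (τ g)⁻¹ = ω)) →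
      ((∀ ω ∈ R, (∀ g ∈ twistedCent τ ω, ∀ h ∈ twistedCent τ ω,
            sgn (g * h) ω = sgn g ω * sgn h ω) ∧ sgn 1 ω = 1) ∧
        (∀ x : G,
          (∑ ω ∈ R, indChar (twistedCent τ ω) (fun h => (sgn h.1 ω : ℂ)) x) =
            ∑ᶠ ψ ∈ irrCharSet G, ψ x))) := by
  have hcast : ∀ g : G,
      ((LinearMap.trace K ({ω : G // ω * τ ω = 1} → K) (ρ g) : K) : ℂ)
        = ∑ ω : {ω : G // ω * τ ω = 1},
            if g * ω.1 * (τ g)⁻¹ = ω.1 then (sgn g ω.1 : ℂ) else 0 := by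
    intro g
    rw [gm_trace K τ hτ sgn ρ hρ g]
    push_cast [apply_ite (fun z : K => (z : ℂ))]
    rfl
  constructor
  · intro htr R hR
    obtain ⟨hR1, hR2⟩ := hR
    constructor
    · intro ω hω
      have hωI : ω * τ ω = 1 := hR1 ω hω
      constructor
      · intro a ha b hb
        have hc := gm_cocycle K τ hτ sgn ρ hρ a b ⟨ω, hωI⟩
        have hb' : b * ω * (τ b)⁻¹ = ω := (gm_mem_tc τ ω b).mp hb
        simpa [hb'] using hc
      · exact gm_one K τ hτ sgn ρ hρ ⟨ω, hωI⟩
    · intro x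
      rw [gm_key K τ hτ sgn ρ hρ R hR1 hR2 x, ← hcast x]
      exact htr x
  · intro hall g
    set r : {ω : G // ω * τ ω = 1} → {ω : G // ω * τ ω = 1} → Prop :=
      fun v w => ∃ x : G, x * v.1 * (τ x)⁻¹ = w.1 with hrdef
    have hrefl : ∀ v, r v v := fun v => ⟨1, gm_act_one τ v.1⟩
    have hsymm : ∀ {v w}, r v w → r w v := by
      rintro v w ⟨x, hx⟩
      exact ⟨x⁻¹, by rw [← hx]; exact gm_act_inv_cancel τ x v.1⟩
    have htrans : ∀ {u v w}, r u v → r v w → r u w := by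
      rintro u v w ⟨x, hx⟩ ⟨y, hy⟩
      exact ⟨y * x, by rw [gm_act_mul τ y x u.1, hx, hy]⟩
    letI sd : Setoid {ω : G // ω * τ ω = 1} :=
      ⟨r, ⟨hrefl, fun h => hsymm h, fun h h' => htrans h h'⟩⟩
    set R : Finset G :=
      Finset.image (fun q : Quotient sd => q.out.1) Finset.univ with hRdef
    have hR1 : ∀ ω ∈ R, ω * τ ω = 1 := by
      intro ω hω
      obtain ⟨q, _, hq⟩ := Finset.mem_image.mp hω
      rw [← hq]; exact q.out.2
    have hR2 : ∀ v : G, v * τ v = 1 → ∃! ω, ω ∈ R ∧ ∃ g : G, g * v * (τ g)⁻¹ = ω := by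
      intro v hv
      set q : Quotient sd := ⟦⟨v, hv⟩⟧ with hqdef
      refine ⟨q.out.1, ⟨Finset.mem_image.mpr ⟨q, Finset.mem_univ _, rfl⟩, ?_⟩, ?_⟩
      · have hout : r q.out ⟨v, hv⟩ := Quotient.mk_out (⟨v, hv⟩ : {ω : G // ω * τ ω = 1})
        obtain ⟨x, hx⟩ := hsymm hout
        exact ⟨x, hx⟩
      · rintro y ⟨hyR, x, hx⟩
        obtain ⟨p, _, hp⟩ := Finset.mem_image.mp hyR
        have hrel : r (⟨v, hv⟩ : {ω : G // ω * τ ω = 1}) p.out := by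
          refine ⟨x, ?_⟩
          rw [hx, ← hp]
        have : p = q := by
          rw [← Quotient.out_eq p, hqdef]
          exact Quotient.sound (hsymm hrel)
        rw [← hp, this]
    obtain ⟨-, hsum⟩ := hall R ⟨hR1, hR2⟩
    rw [hcast g, ← gm_key K τ hτ sgn ρ hρ R hR1 hR2 g]
    exact hsum g
end

section
/- Let r, p, n be positive integers with r even and p dividing r, and let γ be the linear character of G(r,1,n) given by γ(g) = ζ_r^{(r/p)·Δ(g)} for a fixed primitive r-th root of unity ζ_r. Let χ⁺_{r,n} and χ⁻_{r,n} denote the characters of the subrepresentations of ρ_{r,n} on V⁺_{r,n} and V⁻_{r,n}. Then γ⊗χ⁺_{r,n} = χ⁻_{r,n} if n and r/p are both odd and γ⊗χ⁺_{r,n} = χ⁺_{r,n} otherwise; likewise γ⊗χ⁻_{r,n} = χ⁺_{r,n} if n and r/p are both odd and γ⊗χ⁻_{r,n} = χ⁻_{r,n} otherwise. -/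
open scoped Classical BigOperators
open CategoryTheory

noncomputable section

def WP (r n : ℕ) : Type := (Fin n → ZMod r) × Equiv.Perm (Fin n)

namespace WP

variable {r n : ℕ}

def mk (x : Fin n → ZMod r) (π : Equiv.Perm (Fin n)) : WP r n := (x, π)

instance : Mul (WP r n) := ⟨fun g h => (g.1 ∘ ⇑h.2 + h.1, g.2 * h.2)⟩
instance : One (WP r n) := ⟨((0 : Fin n → ZMod r), 1)⟩
instance : Inv (WP r n) := ⟨fun g => (-(g.1 ∘ ⇑g.2⁻¹), g.2⁻¹)⟩

@[simp] theorem mul_def (g h : WP r n) : g * h = (g.1 ∘ ⇑h.2 + h.1, g.2 * h.2) := rfl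
@[simp] theorem one_def : (1 : WP r n) = ((0 : Fin n → ZMod r), 1) := rfl
@[simp] theorem inv_def (g : WP r n) : g⁻¹ = (-(g.1 ∘ ⇑g.2⁻¹), g.2⁻¹) := rfl
@[simp] theorem mk_fst (x : Fin n → ZMod r) (π : Equiv.Perm (Fin n)) : (mk x π).1 = x := rfl
@[simp] theorem mk_snd (x : Fin n → ZMod r) (π : Equiv.Perm (Fin n)) : (mk x π).2 = π := rfl

instance : Group (WP r n) where
  mul_assoc a b c := by
    refine Prod.ext ?_ ?_
    · funext i
      show a.1 (b.2 (c.2 i)) + b.1 (c.2 i) + c.1 i = a.1 (b.2 (c.2 i)) + (b.1 (c.2 i) + c.1 i)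
      exact add_assoc _ _ _
    · show a.2 * b.2 * c.2 = a.2 * (b.2 * c.2)
      exact mul_assoc _ _ _
  one_mul a := by
    refine Prod.ext ?_ ?_
    · funext i
      show (0 : Fin n → ZMod r) (a.2 i) + a.1 i = a.1 i
      simp
    · show 1 * a.2 = a.2
      simp
  mul_one a := by
    refine Prod.ext ?_ ?_
    · funext i
      show a.1 ((1 : Equiv.Perm (Fin n)) i) + (0 : Fin n → ZMod r) i = a.1 i
      simp
    · show a.2 * 1 = a.2
      simp
  inv_mul_cancel a := by
    refine Prod.ext ?_ ?_
    · funext i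
      show -(a.1 (a.2⁻¹ (a.2 i))) + a.1 i = (0 : Fin n → ZMod r) i
      simp
    · show a.2⁻¹ * a.2 = 1
      simp

instance [NeZero r] : Fintype (WP r n) :=
  inferInstanceAs (Fintype ((Fin n → ZMod r) × Equiv.Perm (Fin n)))

/-- `Δ(x,π) = x_1 + ⋯ + x_n ∈ Z/rZ`. -/
def wDelta (g : WP r n) : ZMod r := ∑ i, g.1 i

/-- The transpose `(x,π)ᵀ = (π(x), π⁻¹)`. -/
def wT (g : WP r n) : WP r n := (g.1 ∘ ⇑g.2⁻¹, g.2⁻¹)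

/-- The "complex conjugate" `(x,π) ↦ (-x, π)`. -/
def wBar (g : WP r n) : WP r n := (-g.1, g.2)

theorem wDelta_mul (g h : WP r n) : wDelta (g * h) = wDelta g + wDelta h := by
  simp only [wDelta, mul_def, Pi.add_apply, Function.comp_apply, Finset.sum_add_distrib]
  rw [Equiv.sum_comp h.2 g.1]

theorem wDelta_one : wDelta (1 : WP r n) = 0 := by simp [wDelta]

theorem wDelta_inv (g : WP r n) : wDelta g⁻¹ = - wDelta g := by
  simp only [wDelta, inv_def, Pi.neg_apply, Function.comp_apply, Finset.sum_neg_distrib]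
  rw [Equiv.sum_comp g.2⁻¹ g.1]

theorem wDelta_wT (g : WP r n) : wDelta (wT g) = wDelta g := by
  simp only [wDelta, wT, Function.comp_apply]
  exact Equiv.sum_comp g.2⁻¹ g.1

theorem wDelta_wBar (g : WP r n) : wDelta (wBar g) = - wDelta g := by
  simp [wDelta, wBar, Finset.sum_neg_distrib]

theorem wT_mul (g h : WP r n) : wT (g * h) = wT h * wT g := by
  refine Prod.ext ?_ ?_
  · funext i
    show g.1 (h.2 ((g.2 * h.2)⁻¹ i)) + h.1 ((g.2 * h.2)⁻¹ i) = h.1 (h.2⁻¹ (g.2⁻¹ i)) + g.1 (g.2⁻¹ i)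
    simp [mul_inv_rev, Equiv.Perm.mul_apply, add_comm]
  · show (g.2 * h.2)⁻¹ = h.2⁻¹ * g.2⁻¹
    exact mul_inv_rev _ _

theorem wT_wT (g : WP r n) : wT (wT g) = g := by
  refine Prod.ext ?_ ?_
  · funext i; simp [wT, Function.comp]
  · simp [wT]

theorem wBar_mul (g h : WP r n) : wBar (g * h) = wBar g * wBar h := by
  refine Prod.ext ?_ ?_
  · funext i
    show -(g.1 (h.2 i) + h.1 i) = -g.1 (h.2 i) + -h.1 i
    exact neg_add _ _
  · rfl

theorem wBar_wBar (g : WP r n) : wBar (wBar g) = g := by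
  refine Prod.ext ?_ ?_
  · funext i; simp [wBar]
  · simp [wBar]

end WP

/-- The complex reflection group `G(r,p,n)`, as a subgroup of the wreath product. -/
def Grpn (r p n : ℕ) : Subgroup (WP r n) where
  carrier := {g | WP.wDelta g ∈ AddSubgroup.zmultiples (p : ZMod r)}
  one_mem' := by
    simp only [Set.mem_setOf_eq, WP.wDelta_one]
    exact zero_mem _
  mul_mem' := by
    intro a b ha hb
    simp only [Set.mem_setOf_eq, WP.wDelta_mul] at *
    exact add_mem ha hb
  inv_mem' := by
    intro a ha
    simp only [Set.mem_setOf_eq, WP.wDelta_inv] at *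
    exact neg_mem ha

@[simp] theorem mem_Grpn {r p n : ℕ} {g : WP r n} :
    g ∈ Grpn r p n ↔ WP.wDelta g ∈ AddSubgroup.zmultiples (p : ZMod r) := Iff.rfl

namespace WP

/-- The central element `c = ((1,1,…,1), 1)`. -/
def cElt (r n : ℕ) : WP r n := ((fun _ => 1), 1)

/-- The inversion set of a permutation. -/
def invSet {n : ℕ} (π : Equiv.Perm (Fin n)) : Finset (Fin n × Fin n) :=
  Finset.univ.filter fun q => q.1 < q.2 ∧ π q.2 < π q.1

/-- The set of 2-cycles `(i,j)` of a permutation. -/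
def pairSet {n : ℕ} (π : Equiv.Perm (Fin n)) : Finset (Fin n × Fin n) :=
  Finset.univ.filter fun q => q.1 < q.2 ∧ π q.1 = q.2 ∧ π q.2 = q.1

/-- The set `B(g,ω)` of Adin–Postnikov–Roichman. -/
def Bset (r n : ℕ) (g w : WP r n) : Finset (Fin n) :=
  if Odd r then ∅
  else Finset.univ.filter fun i => w.2 i = i ∧ Odd ((w.1 i).val) ∧
    r / 2 ≤ (g.1 i + (((w.1 i).val / 2 : ℕ) : ZMod r)).val

/-- The sign `sign_{r,n}(g,ω)`. -/
def signrn (r n : ℕ) (g w : WP r n) : ℚ :=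
  (-1 : ℚ) ^ (Bset r n g w).card * (-1 : ℚ) ^ ((invSet g.2 ∩ pairSet w.2).card)

/-- Twisted conjugation `ω ↦ g ω gᵀ` on symmetric elements. -/
def symmConj {r n : ℕ} (g : WP r n) (w : {w : WP r n // wT w = w}) :
    {w : WP r n // wT w = w} :=
  ⟨g * w.1 * wT g, by
    rw [wT_mul, wT_mul, wT_wT, w.2, mul_assoc]⟩

end WP

end

noncomputable section

namespace WP

theorem wT_mem_Grpn {r p n : ℕ} {g : WP r n} (hg : g ∈ Grpn r p n) :
    wT g ∈ Grpn r p n := by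
  rw [mem_Grpn, wDelta_wT]; exact hg

/-- Twisted conjugation `ω ↦ g ω gᵀ` on symmetric elements of `G(r,p,n)`. -/
def symmConjP {r p n : ℕ} (g : Grpn r p n)
    (w : {w : Grpn r p n // wT (w : WP r n) = w}) :
    {w : Grpn r p n // wT (w : WP r n) = w} :=
  ⟨⟨(g : WP r n) * (w.1 : WP r n) * wT (g : WP r n),
      mul_mem (mul_mem g.2 w.1.2) (wT_mem_Grpn g.2)⟩, by
    show wT ((g : WP r n) * (w.1 : WP r n) * wT (g : WP r n)) = _
    rw [wT_mul, wT_mul, wT_wT, w.2]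
    exact (mul_assoc _ _ _).symm⟩

/-- The inverse transpose automorphism `g ↦ ḡ` of `G(r,p,n)`. -/
def barAut (r p n : ℕ) : Grpn r p n ≃* Grpn r p n where
  toFun g := ⟨wBar g.1, by
    rw [mem_Grpn, wDelta_wBar]; exact neg_mem g.2⟩
  invFun g := ⟨wBar g.1, by
    rw [mem_Grpn, wDelta_wBar]; exact neg_mem g.2⟩
  left_inv g := Subtype.ext (wBar_wBar _)
  right_inv g := Subtype.ext (wBar_wBar _)
  map_mul' a b := Subtype.ext (wBar_mul _ _)

/-- `C(r,p,n) = (Z/rZ)^n ∩ Z(G(r,p,n))`, as a set of wreath product elements. -/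
def CCset (r p n : ℕ) : Set (WP r n) :=
  {z | z.2 = 1 ∧ z ∈ Grpn r p n ∧ ∀ h ∈ Grpn r p n, z * h = h * z}

/-- The map `α_{j,k,z} : (x,π) ↦ z^{ℓ(π)} c^{k·Δ(x)} (jx, π)`. -/
def alphaMap (r n : ℕ) (j k : ℤ) (z : WP r n) (g : WP r n) : WP r n :=
  z ^ (invSet g.2).card * cElt r n ^ (k * ((wDelta g).val : ℤ)) * mk (j • g.1) g.2

/-- The character of the subrepresentation of `ρ_{r,n}` on `V⁺_{r,n}`. -/
def chiPlus (r n : ℕ) [NeZero r] (g : WP r n) : ℚ :=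
  ∑ w : {w : WP r n // wT w = w},
    if wDelta w.1 ∈ AddSubgroup.zmultiples (2 : ZMod r) ∧ symmConj g w = w
    then signrn r n g w.1 else 0

/-- The character of the subrepresentation of `ρ_{r,n}` on `V⁻_{r,n}`. -/
def chiMinus (r n : ℕ) [NeZero r] (g : WP r n) : ℚ :=
  ∑ w : {w : WP r n // wT w = w},
    if wDelta w.1 ∉ AddSubgroup.zmultiples (2 : ZMod r) ∧ symmConj g w = w
    then signrn r n g w.1 else 0

/-- The modified set `B̃(g,ω)` used when `p` and `r/p` are both even. -/
def BsetTilde (r p n : ℕ) (g w : WP r n) : Finset (Fin n) :=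
  if wDelta w ∈ AddSubgroup.zmultiples ((2 * p : ℕ) : ZMod r) then
    Finset.univ.filter fun i => w.2 i = i ∧ Odd ((w.1 i).val) ∧
      r / 2 ≤ (g.1 i + (((w.1 i).val / 2 : ℕ) : ZMod r)).val
  else
    Finset.univ.filter fun i => w.2 i = i ∧ Even ((w.1 i).val) ∧
      r / 2 ≤ (g.1 i + (((w.1 i).val / 2 : ℕ) : ZMod r)).val

/-- The modified sign `s̃ign_{r,p,n}(g,ω)`. -/
def signTilde (r p n : ℕ) (g w : WP r n) : ℚ :=
  (-1 : ℚ) ^ (BsetTilde r p n g w).card * (-1 : ℚ) ^ ((invSet g.2 ∩ pairSet w.2).card)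

end WP

end

noncomputable section
open Finset

namespace WPAux

/-- basic nat lemma -/
theorem mod_two_mul (m a e : ℕ) (hm : 0 < m) (he : e < 2) :
    (2 * a + e) % (2 * m) = 2 * (a % m) + e := by
  have h1 : a % m < m := Nat.mod_lt _ hm
  calc (2 * a + e) % (2 * m)
      = (2 * (a % m) + e + 2 * m * (a / m)) % (2 * m) := by
        congr 1
        have := Nat.div_add_mod a m
        ring_nf
        omega
    _ = (2 * (a % m) + e) % (2 * m) := Nat.add_mul_mod_self_left _ _ _
    _ = 2 * (a % m) + e := Nat.mod_eq_of_lt (by omega)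

end WPAux

namespace WP

variable {r n : ℕ}

/-- the central element with all coordinates `a`. -/
def zc (a : ZMod r) : WP r n := WP.mk (fun _ => a) 1

@[simp] theorem zc_fst (a : ZMod r) (i : Fin n) : (zc a : WP r n).1 i = a := rfl
@[simp] theorem zc_snd (a : ZMod r) : (zc a : WP r n).2 = 1 := rfl

theorem zmul_def (a : ZMod r) (h : WP r n) :
    (zc a : WP r n) * h = (fun i => a + h.1 i, h.2) := by
  refine Prod.ext ?_ ?_
  · rfl
  · simp

theorem zmul_comm (a : ZMod r) (h : WP r n) :
    (zc a : WP r n) * h = h * (zc a : WP r n) := by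
  refine Prod.ext ?_ ?_
  · funext i
    show a + h.1 i = h.1 ((1 : Equiv.Perm (Fin n)) i) + a
    simp [add_comm]
  · simp

theorem wT_zmul (a : ZMod r) (w : WP r n) :
    wT ((zc a : WP r n) * w) = (zc a : WP r n) * wT w := by
  rw [zmul_def, zmul_def]
  refine Prod.ext ?_ ?_
  · funext i
    show (fun j => a + w.1 j) (((1 : Equiv.Perm (Fin n)) * w.2)⁻¹ i) = a + w.1 (w.2⁻¹ i)
    simp
  · show ((1 : Equiv.Perm (Fin n)) * w.2)⁻¹ = w.2⁻¹
    simp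

theorem zmul_zmul (a b : ZMod r) (w : WP r n) :
    (zc a : WP r n) * ((zc b : WP r n) * w)
      = (zc (a+b) : WP r n) * w := by
  rw [zmul_def, zmul_def, zmul_def]
  refine Prod.ext ?_ ?_
  · funext i; show a + (b + w.1 i) = a + b + w.1 i; ring
  · rfl

theorem zmul_zero (w : WP r n) : (zc 0 : WP r n) * w = w := by
  rw [zmul_def]
  refine Prod.ext ?_ ?_
  · funext i; show (0 : ZMod r) + w.1 i = w.1 i; simp
  · rfl

theorem wDelta_zmul (a : ZMod r) (w : WP r n) :
    wDelta ((zc a : WP r n) * w) = n * a + wDelta w := by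
  rw [zmul_def]
  show ∑ i : Fin n, (a + w.1 i) = _
  rw [Finset.sum_add_distrib, Finset.sum_const, Finset.card_univ, Fintype.card_fin,
    nsmul_eq_mul]
  rfl

/-- membership in `2 Z_r` is evenness of the value. -/
theorem mem_zmultiples_two_iff [NeZero r] (hre : Even r) (v : ZMod r) :
    v ∈ AddSubgroup.zmultiples (2 : ZMod r) ↔ Even v.val := by
  have h2r : (2 : ℕ) ∣ r := even_iff_two_dvd.mp hre
  constructor
  · rintro hv
    obtain ⟨k, hk⟩ := AddSubgroup.mem_zmultiples_iff.mp hv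
    have hh : (ZMod.castHom h2r (ZMod 2)) v = 0 := by
      rw [← hk]
      have h2 : (k • (2 : ZMod r)) = (2 : ZMod r) * k := by
        rw [zsmul_eq_mul]; ring
      rw [h2, map_mul]
      have : (ZMod.castHom h2r (ZMod 2)) (2 : ZMod r) = 0 := by
        rw [map_ofNat]
        rfl
      rw [this, zero_mul]
    have hval : ((v.val : ℕ) : ZMod 2) = 0 := by
      rwa [ZMod.castHom_apply, ← ZMod.natCast_val v] at hh
    rw [ZMod.natCast_eq_zero_iff] at hval
    exact even_iff_two_dvd.2 hval
  · rintro ⟨t, ht⟩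
    rw [AddSubgroup.mem_zmultiples_iff]
    refine ⟨(t : ℤ), ?_⟩
    have hv : v = ((v.val : ℕ) : ZMod r) := (ZMod.natCast_rightInverse v).symm
    rw [hv, ht, zsmul_eq_mul]
    push_cast
    ring

theorem val_parity_add [NeZero r] (hre : Even r) (a b : ZMod r) :
    (a + b).val % 2 = (a.val + b.val) % 2 := by
  rw [ZMod.val_add, Nat.mod_mod_of_dvd _ (even_iff_two_dvd.mp hre)]

end WP
end

noncomputable section
namespace WPAux

theorem mod_two_mul' (m r a e : ℕ) (hm : 0 < m) (he : e < 2) (hr : 2 * m = r) :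
    (2 * a + e) % r = 2 * (a % m) + e := by
  subst hr
  exact mod_two_mul m a e hm he

theorem negpow_even {A B : ℕ} (h : (A + B) % 2 = 0) : ((-1 : ℚ)) ^ A = (-1 : ℚ) ^ B := by
  rcases Nat.even_or_odd B with hb | hb
  · have ha : Even A := by
      rw [Nat.even_iff] at hb ⊢
      omega
    rw [ha.neg_one_pow, hb.neg_one_pow]
  · have ha : Odd A := by
      rw [Nat.odd_iff] at hb ⊢
      omega
    rw [ha.neg_one_pow, hb.neg_one_pow]

theorem negpow_odd {A B : ℕ} (h : (A + B) % 2 = 1) : ((-1 : ℚ)) ^ A = -(-1 : ℚ) ^ B := by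
  rcases Nat.even_or_odd B with hb | hb
  · have ha : Odd A := by
      rw [Nat.even_iff] at hb
      rw [Nat.odd_iff]
      omega
    rw [ha.neg_one_pow, hb.neg_one_pow]
  · have ha : Even A := by
      rw [Nat.odd_iff] at hb
      rw [Nat.even_iff]
      omega
    rw [ha.neg_one_pow, hb.neg_one_pow]
    norm_num

end WPAux

namespace WP

variable {r n : ℕ}

theorem key [NeZero r] (hre : Even r) (g w : WP r n)
    (hw : wT w = w) (hfix : g * w * wT g = w) :
    signrn r n g (zc 1 * w) = (if wDelta g = 0 then 1 else -1) * signrn r n g w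
      ∧ (wDelta g = 0 ∨ wDelta g = ((r / 2 : ℕ) : ZMod r)) := by
  classical
  have hr2 : r % 2 = 0 := Nat.even_iff.mp hre
  have h2dvd : (2 : ℕ) ∣ r := even_iff_two_dvd.mp hre
  have hrpos : 0 < r := NeZero.pos r
  obtain ⟨m, hm0, h2m⟩ : ∃ m, 0 < m ∧ 2 * m = r := ⟨r / 2, by omega, by omega⟩
  have hrdiv : r / 2 = m := by omega
  -- extract structure from hypotheses
  have hσinv : w.2⁻¹ = w.2 := congrArg Prod.snd hw
  have hσσ : ∀ i, w.2 (w.2 i) = i := by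
    intro i
    have h : w.2⁻¹ (w.2 i) = i := Equiv.symm_apply_apply w.2 i
    rwa [hσinv] at h
  have hyσ : ∀ i, w.1 (w.2 i) = w.1 i := by
    intro i
    have h1 := congrFun (congrArg Prod.fst hw) (w.2 i)
    simpa [wT] using h1.symm
  have hsnd : g.2 * w.2 * g.2⁻¹ = w.2 := congrArg Prod.snd hfix
  have hcommp : g.2 * w.2 = w.2 * g.2 := mul_inv_eq_iff_eq_mul.mp hsnd
  have hcomm : ∀ i, w.2 (g.2 i) = g.2 (w.2 i) := by
    intro i
    rw [← Equiv.Perm.mul_apply, ← Equiv.Perm.mul_apply, hcommp]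
  have hcomminv : ∀ i, w.2 (g.2⁻¹ i) = g.2⁻¹ (w.2 i) := by
    intro i
    apply g.2.injective
    rw [← hcomm (g.2⁻¹ i)]
    simp
  have hrec : ∀ j, w.1 (g.2 j) = w.1 j + g.1 j + g.1 (w.2 j) := by
    intro j
    have h1 : g.1 (w.2 (g.2⁻¹ (g.2 j))) + w.1 (g.2⁻¹ (g.2 j)) + g.1 (g.2⁻¹ (g.2 j))
        = w.1 (g.2 j) := congrFun (congrArg Prod.fst hfix) (g.2 j)
    rw [show g.2⁻¹ (g.2 j) = j from Equiv.symm_apply_apply _ _] at h1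
    linear_combination -h1
  -- cast identities
  have hgx : ∀ i, g.1 i = (((g.1 i).val : ℕ) : ZMod r) := fun i =>
    (ZMod.natCast_rightInverse (g.1 i)).symm
  have hwy : ∀ i, w.1 i = (((w.1 i).val : ℕ) : ZMod r) := fun i =>
    (ZMod.natCast_rightInverse (w.1 i)).symm
  -- the sets
  set F : Finset (Fin n) := Finset.univ.filter (fun i => w.2 i = i) with hF
  set Fc : Finset (Fin n) := Finset.univ.filter (fun i => ¬ w.2 i = i) with hFc
  have hmemF : ∀ a, a ∈ F ↔ w.2 a = a := by intro a; simp [hF]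
  have hmemFc : ∀ a, a ∈ Fc ↔ ¬ w.2 a = a := by intro a; simp [hFc]
  -- the counter function
  set kk : Fin n → ℕ := fun i => ((w.1 i).val / 2 + (g.1 i).val) / m with hkk
  set K : ℕ := ∑ i ∈ F, kk i with hK
  -- basic value bounds
  have hYlt : ∀ i, (w.1 i).val < 2 * m := fun i => by rw [h2m]; exact ZMod.val_lt _
  have hXlt : ∀ i, (g.1 i).val < 2 * m := fun i => by rw [h2m]; exact ZMod.val_lt _
  -- on F : value recurrences
  have f1 : ∀ i, w.2 i = i →
      (w.1 (g.2 i)).val = ((w.1 i).val + 2 * (g.1 i).val) % r := by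
    intro i hi
    have h1 : w.1 (g.2 i) = (((w.1 i).val + 2 * (g.1 i).val : ℕ) : ZMod r) := by
      rw [hrec i, hi]
      conv_lhs => rw [hwy i, hgx i]
      push_cast
      ring
    rw [h1, ZMod.val_natCast]
  have f2 : ∀ i, w.2 i = i →
      (w.1 (g.2 i)).val / 2 = ((w.1 i).val / 2 + (g.1 i).val) % m := by
    intro i hi
    have h1 : (w.1 (g.2 i)).val =
        2 * (((w.1 i).val / 2 + (g.1 i).val) % m) + (w.1 i).val % 2 := by
      rw [f1 i hi]
      have h2 : (w.1 i).val + 2 * (g.1 i).val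
          = 2 * ((w.1 i).val / 2 + (g.1 i).val) + (w.1 i).val % 2 := by omega
      rw [h2]
      exact WPAux.mod_two_mul' m r _ _ hm0 (by omega) h2m
    generalize hB : ((w.1 i).val / 2 + (g.1 i).val) % m = B at h1 ⊢
    omega
  have f3 : ∀ i, w.2 i = i →
      (w.1 i).val / 2 + (g.1 i).val = m * kk i + (w.1 (g.2 i)).val / 2 ∧ kk i ≤ 2 := by
    intro i hi
    constructor
    · rw [f2 i hi, hkk]
      exact (Nat.div_add_mod _ m).symm
    · have h2 := (Nat.div_lt_iff_lt_mul hm0).mpr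
        (show (w.1 i).val / 2 + (g.1 i).val < 3 * m by
          have := hYlt i; have := hXlt i; omega)
      exact Nat.lt_succ_iff.mp h2
  have f4 : ∀ i, w.2 i = i →
      ((m ≤ (g.1 i + ((((w.1 i).val / 2 : ℕ)) : ZMod r)).val) ↔ kk i = 1) := by
    intro i hi
    obtain ⟨hsum, hk2⟩ := f3 i hi
    have hq' : (w.1 (g.2 i)).val / 2 < m := by rw [f2 i hi]; exact Nat.mod_lt _ hm0
    have hv : (g.1 i + (((w.1 i).val / 2 : ℕ) : ZMod r)).val
        = ((g.1 i).val + (w.1 i).val / 2) % r := by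
      conv_lhs => rw [hgx i]
      have h3 : ((((g.1 i).val : ℕ)) : ZMod r) + (((w.1 i).val / 2 : ℕ) : ZMod r)
          = (((g.1 i).val + (w.1 i).val / 2 : ℕ) : ZMod r) := by push_cast; ring
      rw [h3, ZMod.val_natCast]
    rw [hv]
    rcases (by omega : kk i = 0 ∨ kk i = 1 ∨ kk i = 2) with h | h | h <;> rw [h] at hsum
    · rw [Nat.mod_eq_of_lt (show (g.1 i).val + (w.1 i).val / 2 < r by omega)]
      omega
    · rw [Nat.mod_eq_of_lt (show (g.1 i).val + (w.1 i).val / 2 < r by omega)]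
      omega
    · have h5 : (g.1 i).val + (w.1 i).val / 2 = r + (w.1 (g.2 i)).val / 2 := by omega
      rw [h5, Nat.add_mod_left,
        Nat.mod_eq_of_lt (show (w.1 (g.2 i)).val / 2 < r by omega)]
      omega
  -- permutations stabilize F and Fc
  have hgF : ∀ a ∈ F, g.2 a ∈ F := by
    intro a ha
    rw [hmemF] at ha ⊢
    rw [hcomm a, ha]
  have hginvF : ∀ a ∈ F, g.2⁻¹ a ∈ F := by
    intro a ha
    rw [hmemF] at ha ⊢
    rw [hcomminv a, ha]
  have hgFc : ∀ a ∈ Fc, g.2 a ∈ Fc := by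
    intro a ha
    rw [hmemFc] at ha ⊢
    intro hcon
    rw [hcomm a] at hcon
    exact ha (g.2.injective hcon)
  have hginvFc : ∀ a ∈ Fc, g.2⁻¹ a ∈ Fc := by
    intro a ha
    rw [hmemFc] at ha ⊢
    intro hcon
    rw [hcomminv a] at hcon
    exact ha (g.2⁻¹.injective hcon)
  have hσFc : ∀ a ∈ Fc, w.2 a ∈ Fc := by
    intro a ha
    rw [hmemFc] at ha ⊢
    intro hcon
    exact ha (w.2.injective hcon)
  -- sum over F of X equals m * K
  have hqmove : ∑ i ∈ F, (w.1 (g.2 i)).val / 2 = ∑ i ∈ F, (w.1 i).val / 2 := by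
    refine Finset.sum_nbij' (fun i => g.2 i) (fun i => g.2⁻¹ i) hgF hginvF ?_ ?_ ?_
    · intro a _; exact Equiv.symm_apply_apply _ _
    · intro a _; exact Equiv.apply_symm_apply _ _
    · intro a _; rfl
  have hXsum : ∑ i ∈ F, (g.1 i).val = m * K := by
    have h1 : ∑ i ∈ F, ((w.1 i).val / 2 + (g.1 i).val)
        = ∑ i ∈ F, (m * kk i + (w.1 (g.2 i)).val / 2) :=
      Finset.sum_congr rfl (fun i hi => (f3 i ((hmemF i).1 hi)).1)
    rw [Finset.sum_add_distrib, Finset.sum_add_distrib, hqmove] at h1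
    have h2 : ∑ i ∈ F, m * kk i = m * K := by rw [hK, Finset.mul_sum]
    rw [h2] at h1
    set C := m * K with hC
    omega
  -- sum over Fc of x is zero
  have hnumdvd : ∀ i, (r : ℤ) ∣
      ((g.1 i).val + (g.1 (w.2 i)).val + (w.1 i).val - (w.1 (g.2 i)).val : ℤ) := by
    intro i
    rw [← ZMod.intCast_zmod_eq_zero_iff_dvd]
    push_cast
    rw [← hgx i, ← hgx (w.2 i), ← hwy i, ← hwy (g.2 i)]
    linear_combination - hrec i
  set e : Fin n → ℤ := fun i =>
    ((g.1 i).val + (g.1 (w.2 i)).val + (w.1 i).val - (w.1 (g.2 i)).val : ℤ) / r with he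
  have hnum : ∀ i, ((g.1 i).val + (g.1 (w.2 i)).val + (w.1 i).val - (w.1 (g.2 i)).val : ℤ)
      = r * e i := fun i => (Int.mul_ediv_cancel' (hnumdvd i)).symm
  have hesym : ∀ i, e (w.2 i) = e i := by
    intro i
    have h1 : ((g.1 (w.2 i)).val + (g.1 (w.2 (w.2 i))).val + (w.1 (w.2 i)).val
        - (w.1 (g.2 (w.2 i))).val : ℤ)
        = ((g.1 i).val + (g.1 (w.2 i)).val + (w.1 i).val - (w.1 (g.2 i)).val : ℤ) := by
      rw [hσσ i, hyσ i, ← hcomm i, hyσ (g.2 i)]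
      ring
    rw [he]
    show ((g.1 (w.2 i)).val + (g.1 (w.2 (w.2 i))).val + (w.1 (w.2 i)).val
        - (w.1 (g.2 (w.2 i))).val : ℤ) / r = _
    rw [h1]
  have hXσsum : ∑ i ∈ Fc, ((g.1 (w.2 i)).val : ℤ) = ∑ i ∈ Fc, ((g.1 i).val : ℤ) := by
    refine Finset.sum_nbij' (fun i => w.2 i) (fun i => w.2 i) hσFc hσFc
      (fun a _ => hσσ a) (fun a _ => hσσ a) ?_
    intro a _; rfl
  have hYπsum : ∑ i ∈ Fc, ((w.1 (g.2 i)).val : ℤ) = ∑ i ∈ Fc, ((w.1 i).val : ℤ) := by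
    refine Finset.sum_nbij' (fun i => g.2 i) (fun i => g.2⁻¹ i) hgFc hginvFc ?_ ?_ ?_
    · intro a _; exact Equiv.symm_apply_apply _ _
    · intro a _; exact Equiv.apply_symm_apply _ _
    · intro a _; rfl
  have heven : Even (∑ i ∈ Fc, e i) := by
    have hs0 : ∑ i ∈ Fc, ((e i : ℤ) : ZMod 2) = 0 := by
      refine Finset.sum_involution (fun a _ => w.2 a) ?_ ?_ (fun a ha => hσFc a ha) ?_
      · intro a ha
        rw [hesym a]
        exact CharTwo.add_self_eq_zero _
      · intro a ha _
        exact fun hcon => ((hmemFc a).1 ha) hcon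
      · intro a ha
        exact hσσ a
    have h1 : (((∑ i ∈ Fc, e i : ℤ)) : ZMod 2) = 0 := by push_cast at hs0 ⊢; exact hs0
    rw [ZMod.intCast_zmod_eq_zero_iff_dvd] at h1
    exact even_iff_two_dvd.mpr (by exact_mod_cast h1)
  have hXFc : ∑ i ∈ Fc, g.1 i = 0 := by
    obtain ⟨t, ht⟩ := heven
    have h1 : ∑ i ∈ Fc, ((g.1 i).val + (g.1 (w.2 i)).val + (w.1 i).val
        - (w.1 (g.2 i)).val : ℤ) = (r : ℤ) * (t + t) := by
      rw [← ht, Finset.mul_sum]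
      exact Finset.sum_congr rfl (fun i _ => hnum i)
    have h2 : ∑ i ∈ Fc, ((g.1 i).val + (g.1 (w.2 i)).val + (w.1 i).val
        - (w.1 (g.2 i)).val : ℤ)
        = 2 * ∑ i ∈ Fc, ((g.1 i).val : ℤ) := by
      rw [Finset.sum_sub_distrib, Finset.sum_add_distrib, Finset.sum_add_distrib,
        hXσsum, hYπsum]
      ring
    have h3 : ∑ i ∈ Fc, ((g.1 i).val : ℤ) = (r : ℤ) * t := by
      have h5 : (2 : ℤ) * ∑ i ∈ Fc, ((g.1 i).val : ℤ) = 2 * ((r : ℤ) * t) := by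
        rw [← h2, h1]; ring
      linarith
    have h4 : ∑ i ∈ Fc, g.1 i = (((∑ i ∈ Fc, ((g.1 i).val : ℤ)) : ℤ) : ZMod r) := by
      push_cast
      exact Finset.sum_congr rfl (fun i _ => by rw [← hgx i])
    rw [h4, h3]
    push_cast
    simp
  -- Delta g
  have hdelta : wDelta g = ((m * K : ℕ) : ZMod r) := by
    have hsplit : wDelta g = ∑ i ∈ F, g.1 i + ∑ i ∈ Fc, g.1 i := by
      rw [wDelta, hF, hFc]
      exact (Finset.sum_filter_add_sum_filter_not Finset.univ _ _).symm
    have hFcast : ∑ i ∈ F, g.1 i = ((∑ i ∈ F, (g.1 i).val : ℕ) : ZMod r) := by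
      push_cast
      exact Finset.sum_congr rfl (fun i _ => hgx i)
    rw [hsplit, hXFc, add_zero, hFcast, hXsum]
  have hmne : (((m : ℕ)) : ZMod r) ≠ 0 := by
    intro hcon
    rw [ZMod.natCast_eq_zero_iff] at hcon
    have := Nat.le_of_dvd hm0 hcon
    omega
  have hKdelta : (wDelta g = 0 ↔ Even K) := by
    constructor
    · intro h0
      rw [hdelta, ZMod.natCast_eq_zero_iff, ← h2m] at h0
      obtain ⟨c, hc⟩ := h0
      have h5 : m * K = m * (2 * c) := by rw [hc]; ring
      have h6 := Nat.eq_of_mul_eq_mul_left hm0 h5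
      exact ⟨c, by omega⟩
    · rintro ⟨c, hc⟩
      rw [hdelta, hc]
      have h5 : m * (c + c) = r * c := by rw [← h2m]; ring
      rw [h5]
      push_cast
      simp
  have hdeltam : ¬ Even K → wDelta g = ((m : ℕ) : ZMod r) := by
    intro hodd
    have hoddK : K % 2 = 1 := by
      rcases Nat.even_or_odd K with h | h
      · exact absurd h hodd
      · exact Nat.odd_iff.mp h
    obtain ⟨c, hc⟩ : ∃ c, K = 2 * c + 1 := ⟨K / 2, by omega⟩
    rw [hdelta, hc]
    have h1 : m * (2 * c + 1) = r * c + m := by rw [← h2m]; ring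
    rw [h1]
    push_cast
    simp
  -- B sets
  have hrnotodd : ¬ Odd r := by simp [Nat.odd_iff, hr2]
  have hBw : Bset r n g w = Finset.univ.filter (fun i => w.2 i = i ∧ Odd ((w.1 i).val) ∧
      r / 2 ≤ (g.1 i + (((w.1 i).val / 2 : ℕ) : ZMod r)).val) := by
    rw [Bset, if_neg hrnotodd]
  have hcwmul : (zc 1 : WP r n) * w = (fun i => 1 + w.1 i, w.2) := zmul_def 1 w
  have hBcw : Bset r n g (zc 1 * w) = Finset.univ.filter (fun i => w.2 i = i ∧
      Odd ((1 + w.1 i).val) ∧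
      r / 2 ≤ (g.1 i + ((((1 + w.1 i).val / 2 : ℕ)) : ZMod r)).val) := by
    rw [Bset, if_neg hrnotodd, hcwmul]
  have hY1v : ∀ i, (1 + w.1 i).val = (1 + (w.1 i).val) % r := by
    intro i
    rw [ZMod.val_add, ZMod.val_one_eq_one_mod, Nat.mod_add_mod]
  have hcards : (((Bset r n g (zc 1 * w)).card + (Bset r n g w).card : ℕ) : ZMod 2)
      = ((K : ℕ) : ZMod 2) := by
    rw [hBcw, hBw, Finset.card_filter, Finset.card_filter, hK]
    push_cast
    rw [hF, Finset.sum_filter, ← Finset.sum_add_distrib]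
    apply Finset.sum_congr rfl
    intro i _
    by_cases hi : w.2 i = i
    swap
    · simp [hi]
    rw [if_pos hi]
    have hiff := f4 i hi
    have hk2 := (f3 i hi).2
    by_cases hodd : Odd ((w.1 i).val)
    · have hnotodd2 : ¬ Odd ((1 + w.1 i).val) := by
        rw [hY1v i, Nat.odd_iff, Nat.mod_mod_of_dvd _ h2dvd]
        rw [Nat.odd_iff] at hodd
        omega
      rw [if_neg (fun hc => hnotodd2 hc.2.1), zero_add, hrdiv]
      rcases (by omega : kk i = 0 ∨ kk i = 1 ∨ kk i = 2) with h | h | h <;>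
        rw [h] at hiff ⊢
      · rw [if_neg (fun hc => by simpa using hiff.mp hc.2.2)]
        norm_num
      · rw [if_pos ⟨hi, hodd, hiff.mpr rfl⟩]
        norm_num
      · rw [if_neg (fun hc => by simpa using hiff.mp hc.2.2)]
        decide
    · have hYev : (w.1 i).val % 2 = 0 := by
        rcases Nat.even_or_odd ((w.1 i).val) with h | h
        · exact Nat.even_iff.mp h
        · exact absurd h hodd
      have hYlt' := hYlt i
      have h1v : (1 + w.1 i).val = 1 + (w.1 i).val := by
        rw [hY1v i]
        exact Nat.mod_eq_of_lt (by omega)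
      have hodd2 : Odd ((1 + w.1 i).val) := by rw [h1v, Nat.odd_iff]; omega
      have hdiv : (1 + w.1 i).val / 2 = (w.1 i).val / 2 := by rw [h1v]; omega
      rw [hdiv, hrdiv]
      rw [if_neg (show ¬(w.2 i = i ∧ Odd (w.1 i).val ∧
          m ≤ (g.1 i + (((w.1 i).val / 2 : ℕ) : ZMod r)).val) from fun hc => hodd hc.2.1),
        add_zero]
      rcases (by omega : kk i = 0 ∨ kk i = 1 ∨ kk i = 2) with h | h | h <;>
        rw [h] at hiff ⊢
      · rw [if_neg (fun hc => by simpa using hiff.mp hc.2.2)]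
        norm_num
      · rw [if_pos ⟨hi, hodd2, hiff.mpr rfl⟩]
        norm_num
      · rw [if_neg (fun hc => by simpa using hiff.mp hc.2.2)]
        decide
  have hmod : ((Bset r n g (zc 1 * w)).card + (Bset r n g w).card) % 2 = K % 2 := by
    have h1 := hcards
    rw [Nat.cast_add, ← Nat.cast_add, ZMod.natCast_eq_natCast_iff] at h1
    exact h1
  constructor
  · simp only [signrn]
    have hp2 : ((zc 1 : WP r n) * w).2 = w.2 := by rw [hcwmul]
    rw [hp2]
    by_cases h0 : wDelta g = 0
    · rw [if_pos h0]
      obtain ⟨c, hc⟩ := hKdelta.mp h0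
      have h2 : ((Bset r n g (zc 1 * w)).card + (Bset r n g w).card) % 2 = 0 := by omega
      rw [WPAux.negpow_even h2]
      ring
    · rw [if_neg h0]
      have hoddK : K % 2 = 1 := by
        rcases Nat.even_or_odd K with h | h
        · exact absurd (hKdelta.mpr h) h0
        · exact Nat.odd_iff.mp h
      have h2 : ((Bset r n g (zc 1 * w)).card + (Bset r n g w).card) % 2 = 1 := by omega
      rw [WPAux.negpow_odd h2]
      ring
  · by_cases h0 : wDelta g = 0
    · exact Or.inl h0
    · right
      rw [hrdiv]
      exact hdeltam (fun hev => h0 (hKdelta.mpr hev))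

end WP
end

noncomputable section
namespace WP

variable {r n : ℕ}

/-- the shift equivalence on symmetric elements. -/
def shiftSym (r n : ℕ) : {w : WP r n // wT w = w} ≃ {w : WP r n // wT w = w} where
  toFun w := ⟨zc 1 * w.1, by rw [wT_zmul, w.2]⟩
  invFun w := ⟨zc (-1) * w.1, by rw [wT_zmul, w.2]⟩
  left_inv w := by
    apply Subtype.ext
    show zc (-1) * (zc 1 * w.1) = w.1
    rw [zmul_zmul, show ((-1 : ZMod r) + 1) = 0 from by ring, zmul_zero]
  right_inv w := by
    apply Subtype.ext
    show zc 1 * (zc (-1) * w.1) = w.1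
    rw [zmul_zmul, show ((1 : ZMod r) + -1) = 0 from by ring, zmul_zero]

@[simp] theorem shiftSym_apply (w : {w : WP r n // wT w = w}) :
    ((shiftSym r n w : {w : WP r n // wT w = w}) : WP r n) = zc 1 * w.1 := rfl

theorem fix_zc (g w : WP r n) (a : ZMod r) :
    g * (zc a * w) * wT g = zc a * (g * w * wT g) := by
  have h1 : g * (zc a * w) = zc a * (g * w) := by
    rw [← mul_assoc, ← zmul_comm a g, mul_assoc]
  rw [h1, mul_assoc]

theorem symmConj_shift_iff (g : WP r n) (w : {w : WP r n // wT w = w}) :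
    symmConj g (shiftSym r n w) = shiftSym r n w ↔ symmConj g w = w := by
  rw [Subtype.ext_iff, Subtype.ext_iff]
  show g * (zc 1 * w.1) * wT g = zc 1 * w.1 ↔ g * w.1 * wT g = w.1
  rw [fix_zc]
  exact mul_right_inj _

theorem chi_shift_aux [NeZero r] (hre : Even r) (g : WP r n) (p : ZMod r → Prop) [DecidablePred p] :
    (∑ w : {w : WP r n // wT w = w},
        if p (wDelta w.1) ∧ symmConj g w = w then signrn r n g w.1 else 0)
      = (if wDelta g = 0 then (1 : ℚ) else -1) *
        (∑ w : {w : WP r n // wT w = w},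
          if p ((n : ZMod r) + wDelta w.1) ∧ symmConj g w = w
          then signrn r n g w.1 else 0) := by
  classical
  rw [← Equiv.sum_comp (shiftSym r n)
    (fun w => if p (wDelta w.1) ∧ symmConj g w = w then signrn r n g w.1 else 0),
    Finset.mul_sum]
  apply Finset.sum_congr rfl
  intro w _
  have hdel : wDelta ((zc 1 : WP r n) * w.1) = (n : ZMod r) + wDelta w.1 := by
    rw [wDelta_zmul, mul_one]
  simp only [shiftSym_apply, hdel, symmConj_shift_iff]
  by_cases hc : p ((n : ZMod r) + wDelta w.1) ∧ symmConj g w = w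
  · rw [if_pos hc, if_pos hc, (key hre g w.1 w.2 (congrArg Subtype.val hc.2)).1]
  · rw [if_neg hc, if_neg hc, mul_zero]

theorem mem_add_parity [NeZero r] (hre : Even r) (v : ZMod r) (k : ℕ) :
    ((k : ZMod r) + v ∈ AddSubgroup.zmultiples (2 : ZMod r)) ↔
      (if Even k then v ∈ AddSubgroup.zmultiples (2 : ZMod r)
        else ¬ v ∈ AddSubgroup.zmultiples (2 : ZMod r)) := by
  have h2r : (2 : ℕ) ∣ r := even_iff_two_dvd.mp hre
  have hval : ((k : ZMod r) + v).val % 2 = (k + v.val) % 2 := by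
    rw [ZMod.val_add, Nat.mod_mod_of_dvd _ h2r, ZMod.val_natCast]
    have h1 : k % r % 2 = k % 2 := Nat.mod_mod_of_dvd _ h2r
    omega
  rw [mem_zmultiples_two_iff hre]
  by_cases hk : Even k
  · rw [if_pos hk, mem_zmultiples_two_iff hre, Nat.even_iff, Nat.even_iff]
    have hk2 : k % 2 = 0 := Nat.even_iff.mp hk
    omega
  · rw [if_neg hk, mem_zmultiples_two_iff hre, Nat.even_iff, Nat.even_iff]
    have hk2 : k % 2 = 1 := Nat.odd_iff.mp (Nat.odd_iff.mpr (by
      rcases Nat.even_or_odd k with h | h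
      · exact absurd h hk
      · exact Nat.odd_iff.mp h))
    omega

theorem chiPlus_def [NeZero r] (g : WP r n) :
    chiPlus r n g = ∑ w : {w : WP r n // wT w = w},
      if wDelta w.1 ∈ AddSubgroup.zmultiples (2 : ZMod r) ∧ symmConj g w = w
      then signrn r n g w.1 else 0 := rfl

theorem chiMinus_def [NeZero r] (g : WP r n) :
    chiMinus r n g = ∑ w : {w : WP r n // wT w = w},
      if ¬ wDelta w.1 ∈ AddSubgroup.zmultiples (2 : ZMod r) ∧ symmConj g w = w
      then signrn r n g w.1 else 0 := rfl

theorem chi_shift_mem [NeZero r] (hre : Even r) (g : WP r n) :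
    (∑ w : {w : WP r n // wT w = w},
        if wDelta w.1 ∈ AddSubgroup.zmultiples (2 : ZMod r) ∧ symmConj g w = w
        then signrn r n g w.1 else 0)
      = (if wDelta g = 0 then (1 : ℚ) else -1) *
        (∑ w : {w : WP r n // wT w = w},
          if ((n : ZMod r) + wDelta w.1) ∈ AddSubgroup.zmultiples (2 : ZMod r)
              ∧ symmConj g w = w
          then signrn r n g w.1 else 0) :=
  chi_shift_aux hre g (fun v => v ∈ AddSubgroup.zmultiples (2 : ZMod r))

theorem chi_shift_notmem [NeZero r] (hre : Even r) (g : WP r n) :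
    (∑ w : {w : WP r n // wT w = w},
        if ¬ wDelta w.1 ∈ AddSubgroup.zmultiples (2 : ZMod r) ∧ symmConj g w = w
        then signrn r n g w.1 else 0)
      = (if wDelta g = 0 then (1 : ℚ) else -1) *
        (∑ w : {w : WP r n // wT w = w},
          if ¬ ((n : ZMod r) + wDelta w.1) ∈ AddSubgroup.zmultiples (2 : ZMod r)
              ∧ symmConj g w = w
          then signrn r n g w.1 else 0) :=
  chi_shift_aux hre g (fun v => ¬ v ∈ AddSubgroup.zmultiples (2 : ZMod r))

theorem chiPlus_shift [NeZero r] (hre : Even r) (g : WP r n) :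
    chiPlus r n g = (if wDelta g = 0 then (1 : ℚ) else -1) *
      (if Odd n then chiMinus r n g else chiPlus r n g) := by
  classical
  by_cases hn : Odd n
  · have hs : (∑ w : {w : WP r n // wT w = w},
        if ((n : ZMod r) + wDelta w.1) ∈ AddSubgroup.zmultiples (2 : ZMod r)
            ∧ symmConj g w = w
        then signrn r n g w.1 else 0) = chiMinus r n g := by
      rw [chiMinus_def]
      apply Finset.sum_congr rfl
      intro w _
      refine if_congr (and_congr_left' ?_) rfl rfl
      rw [mem_add_parity hre _ n, if_neg (by rwa [Nat.not_even_iff_odd])]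
    rw [chiPlus_def, chi_shift_mem hre g, hs, if_pos hn]
  · have hs : (∑ w : {w : WP r n // wT w = w},
        if ((n : ZMod r) + wDelta w.1) ∈ AddSubgroup.zmultiples (2 : ZMod r)
            ∧ symmConj g w = w
        then signrn r n g w.1 else 0) = chiPlus r n g := by
      rw [chiPlus_def]
      apply Finset.sum_congr rfl
      intro w _
      refine if_congr (and_congr_left' ?_) rfl rfl
      rw [mem_add_parity hre _ n, if_pos (Nat.not_odd_iff_even.mp hn)]
    have hmain : chiPlus r n g = (if wDelta g = 0 then (1 : ℚ) else -1) * chiPlus r n g := by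
      conv_lhs => rw [chiPlus_def, chi_shift_mem hre g, hs]
    rw [if_neg hn]
    exact hmain

theorem chiMinus_shift [NeZero r] (hre : Even r) (g : WP r n) :
    chiMinus r n g = (if wDelta g = 0 then (1 : ℚ) else -1) *
      (if Odd n then chiPlus r n g else chiMinus r n g) := by
  classical
  by_cases hn : Odd n
  · have hs : (∑ w : {w : WP r n // wT w = w},
        if ¬ ((n : ZMod r) + wDelta w.1) ∈ AddSubgroup.zmultiples (2 : ZMod r)
            ∧ symmConj g w = w
        then signrn r n g w.1 else 0) = chiPlus r n g := by
      rw [chiPlus_def]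
      apply Finset.sum_congr rfl
      intro w _
      refine if_congr (and_congr_left' ?_) rfl rfl
      rw [mem_add_parity hre _ n, if_neg (by rwa [Nat.not_even_iff_odd])]
      exact not_not
    rw [chiMinus_def, chi_shift_notmem hre g, hs, if_pos hn]
  · have hs : (∑ w : {w : WP r n // wT w = w},
        if ¬ ((n : ZMod r) + wDelta w.1) ∈ AddSubgroup.zmultiples (2 : ZMod r)
            ∧ symmConj g w = w
        then signrn r n g w.1 else 0) = chiMinus r n g := by
      rw [chiMinus_def]
      apply Finset.sum_congr rfl
      intro w _
      refine if_congr (and_congr_left' ?_) rfl rfl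
      rw [mem_add_parity hre _ n, if_pos (Nat.not_odd_iff_even.mp hn)]
    have hmain : chiMinus r n g = (if wDelta g = 0 then (1 : ℚ) else -1) * chiMinus r n g := by
      conv_lhs => rw [chiMinus_def, chi_shift_notmem hre g, hs]
    rw [if_neg hn]
    exact hmain

theorem chiPlus_eq_zero [NeZero r] (g : WP r n) (h : wDelta g + wDelta g ≠ 0) :
    chiPlus r n g = 0 := by
  classical
  rw [chiPlus_def]
  apply Finset.sum_eq_zero
  intro w _
  rw [if_neg]
  rintro ⟨-, hfix⟩
  apply h
  have hfixraw : g * w.1 * wT g = w.1 := congrArg Subtype.val hfix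
  have hd := congrArg wDelta hfixraw
  rw [wDelta_mul, wDelta_mul, wDelta_wT] at hd
  have h2 : wDelta g + wDelta g + wDelta w.1 = 0 + wDelta w.1 := by
    rw [zero_add]
    linear_combination hd
  exact add_right_cancel h2

theorem chiMinus_eq_zero [NeZero r] (g : WP r n) (h : wDelta g + wDelta g ≠ 0) :
    chiMinus r n g = 0 := by
  classical
  rw [chiMinus_def]
  apply Finset.sum_eq_zero
  intro w _
  rw [if_neg]
  rintro ⟨-, hfix⟩
  apply h
  have hfixraw : g * w.1 * wT g = w.1 := congrArg Subtype.val hfix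
  have hd := congrArg wDelta hfixraw
  rw [wDelta_mul, wDelta_mul, wDelta_wT] at hd
  have h2 : wDelta g + wDelta g + wDelta w.1 = 0 + wDelta w.1 := by
    rw [zero_add]
    linear_combination hd
  exact add_right_cancel h2

theorem two_delta_cases [NeZero r] (hre : Even r) (v : ZMod r) (h : v + v = 0) :
    v = 0 ∨ v = ((r / 2 : ℕ) : ZMod r) := by
  have hvlt := ZMod.val_lt v
  have hv : v = ((v.val : ℕ) : ZMod r) := (ZMod.natCast_rightInverse v).symm
  have h0 : (v + v).val = 0 := by rw [h]; exact ZMod.val_zero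
  rw [ZMod.val_add] at h0
  obtain ⟨c, hc⟩ := Nat.dvd_of_mod_eq_zero h0
  have hr2 : r % 2 = 0 := Nat.even_iff.mp hre
  rcases Nat.lt_or_ge c 2 with hc2 | hc2
  · rcases (by omega : c = 0 ∨ c = 1) with h1 | h1
    · left
      rw [h1, Nat.mul_zero] at hc
      have : v.val = 0 := by omega
      rw [hv, this]
      simp
    · right
      rw [h1, Nat.mul_one] at hc
      have : v.val = r / 2 := by omega
      rw [hv, this]
  · exfalso
    have h3 : r * 2 ≤ r * c := Nat.mul_le_mul_left r hc2
    set A := r * c with hA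
    omega

end WP
end

noncomputable section
namespace WP

theorem main_half {r n : ℕ} [NeZero r] (p : ℕ) (hre : Even r)
    (ζ : ℂ) (hζ : IsPrimitiveRoot ζ r) (g : WP r n) (A B : ℚ)
    (hAs : A = (if wDelta g = 0 then (1 : ℚ) else -1) * (if Odd n then B else A))
    (hA0 : wDelta g + wDelta g ≠ 0 → A = 0)
    (hB0 : wDelta g + wDelta g ≠ 0 → B = 0) :
    ζ ^ ((r / p) * (wDelta g).val) * (A : ℂ)
      = if Odd n ∧ Odd (r / p) then (B : ℂ) else (A : ℂ) := by
  classical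
  have hrpos : 0 < r := NeZero.pos r
  have hr2 : r % 2 = 0 := Nat.even_iff.mp hre
  have hm0 : 0 < r / 2 := by omega
  have hmlt : r / 2 < r := by omega
  by_cases hD : wDelta g + wDelta g = 0
  · rcases two_delta_cases hre _ hD with h0 | hm
    · rw [if_pos h0, one_mul] at hAs
      rw [h0, ZMod.val_zero, Nat.mul_zero, pow_zero, one_mul]
      split_ifs with hcase
      · rw [if_pos hcase.1] at hAs
        exact_mod_cast hAs
      · rfl
    · have hval : (wDelta g).val = r / 2 := by
        rw [hm, ZMod.val_natCast, Nat.mod_eq_of_lt hmlt]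
      have hne : wDelta g ≠ 0 := by
        rw [hm]
        intro hcon
        rw [ZMod.natCast_eq_zero_iff] at hcon
        have := Nat.le_of_dvd hm0 hcon
        omega
      rw [if_neg hne] at hAs
      have hζm : ζ ^ (r / 2) = -1 := by
        have h2 : (ζ ^ (r / 2)) ^ 2 = 1 := by
          rw [← pow_mul, show r / 2 * 2 = r from by omega]
          exact hζ.pow_eq_one
        have hne1 : ζ ^ (r / 2) ≠ 1 := hζ.pow_ne_one_of_pos_of_lt hm0.ne' hmlt
        have hfac : (ζ ^ (r / 2) - 1) * (ζ ^ (r / 2) + 1) = 0 := by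
          linear_combination h2
        rcases mul_eq_zero.mp hfac with h | h
        · exact absurd (sub_eq_zero.mp h) hne1
        · exact eq_neg_of_add_eq_zero_left h
      have hpow : ζ ^ ((r / p) * (wDelta g).val) = (-1 : ℂ) ^ (r / p) := by
        rw [hval, Nat.mul_comm, pow_mul, hζm]
      rw [hpow]
      by_cases hno : Odd n
      · rw [if_pos hno] at hAs
        have hAB : A = -B := by linarith
        by_cases hrp : Odd (r / p)
        · rw [if_pos ⟨hno, hrp⟩, hrp.neg_one_pow]
          rw [hAB]
          push_cast
          ring
        · rw [if_neg (fun hc => hrp hc.2),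
            (Nat.not_odd_iff_even.mp hrp).neg_one_pow, one_mul]
      · rw [if_neg hno] at hAs
        have hA : A = 0 := by linarith
        rw [if_neg (fun hc => hno hc.1), hA]
        push_cast
        ring
  · rw [hA0 hD, hB0 hD]
    push_cast
    simp

end WP
end

/-- Tensoring the characters `χ⁺_{r,n}`, `χ⁻_{r,n}` with the linear character
`γ = ψ_{r/p} ∘ Δ` swaps them when `n` and `r/p` are both odd, and fixes them
otherwise. -/
theorem gamma_tensor_chi_pm (r p n : ℕ) [NeZero r] (hre : Even r) (hp : 0 < p)
    (hn : 0 < n) (hpr : p ∣ r) (ζ : ℂ) (hζ : IsPrimitiveRoot ζ r) :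
    (∀ g : WP r n,
      ζ ^ ((r / p) * (WP.wDelta g).val) * (WP.chiPlus r n g : ℂ) =
        if Odd n ∧ Odd (r / p) then (WP.chiMinus r n g : ℂ)
        else (WP.chiPlus r n g : ℂ)) ∧
    (∀ g : WP r n,
      ζ ^ ((r / p) * (WP.wDelta g).val) * (WP.chiMinus r n g : ℂ) =
        if Odd n ∧ Odd (r / p) then (WP.chiPlus r n g : ℂ)
        else (WP.chiMinus r n g : ℂ)) := by
  constructor
  · intro g
    exact WP.main_half p hre ζ hζ g _ _ (WP.chiPlus_shift hre g)
      (fun h => WP.chiPlus_eq_zero g h) (fun h => WP.chiMinus_eq_zero g h)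
  · intro g
    exact WP.main_half p hre ζ hζ g _ _ (WP.chiMinus_shift hre g)
      (fun h => WP.chiMinus_eq_zero g h) (fun h => WP.chiPlus_eq_zero g h)
end
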